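/- arXiv:1909.06717 — 6 statements merged into one kernel-verified Lean document; each statement's English description precedes it below -/
import Mathlib

section
/- Let μ be a σ-finite measure on a measurable space X, and let p and q be probability densities with respect to μ (measurable nonnegative functions with ∫ p dμ = ∫ q dμ = 1). Define D*(x) = p(x)/(p(x) + q(x)) at points where p(x) + q(x) > 0 (and arbitrarily, say 1/2, elsewhere). Then for every measurable function D : X → (0, 1), assuming the integrals are well-defined in [−∞, ∞), one has ∫ p·log D dμ + ∫ q·log(1 − D) dμ ≤ ∫ p·log D* dμ + ∫ q·log(1 − D*) dμ. In other words, D* maximizes the adversarial objective L(D) = ∫ p log D dμ + ∫ q log(1 − D) dμ over all discriminators D : X → (0,1). -/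
/-!
Pointwise, `t ↦ a log t + b log (1 - t)` is maximised on `(0, 1)` at `t = a / (a + b)`:
this is Gibbs' inequality for the two-point distributions `(t, 1 - t)` and
`(a, b) / (a + b)`, obtained from `log x ≤ x - 1`. Integrating the pointwise bound gives the
theorem.
-/

open MeasureTheory Real

lemma mul_log_le_mul_log_div_add {a c t : ℝ} (ha : 0 ≤ a) (hc : 0 < c) (ht : 0 < t) :
    a * log t ≤ a * log (a / c) + (c * t - a) := by
  rcases ha.eq_or_lt with rfl | ha
  · simp only [zero_mul, zero_div, log_zero, sub_zero, zero_add]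
    positivity
  have hlog : log (c * t / a) ≤ c * t / a - 1 := log_le_sub_one_of_pos (by positivity)
  calc a * log t = a * log (a / c) + a * log (c * t / a) := by
        rw [← mul_add, ← log_mul (by positivity) (by positivity)]
        congr 2
        field_simp
    _ ≤ a * log (a / c) + a * (c * t / a - 1) := by gcongr
    _ = a * log (a / c) + (c * t - a) := by field_simp

lemma mul_log_add_mul_log_one_sub_le {a b t : ℝ} (ha : 0 ≤ a) (hb : 0 ≤ b) (hab : 0 < a + b)
    (ht₀ : 0 < t) (ht₁ : t < 1) :
    a * log t + b * log (1 - t) ≤ a * log (a / (a + b)) + b * log (1 - a / (a + b)) := by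
  have hbound_a := mul_log_le_mul_log_div_add ha hab ht₀
  have hbound_b := mul_log_le_mul_log_div_add hb hab (sub_pos.2 ht₁)
  have hcompl : 1 - a / (a + b) = b / (a + b) := by field_simp; ring
  rw [hcompl]
  linarith

theorem optimal_discriminator_general {X : Type*} [MeasurableSpace X]
    (μ : Measure X)
    (p q : X → ℝ)
    (hp0 : ∀ x, 0 ≤ p x) (hq0 : ∀ x, 0 ≤ q x)
    (Dstar : X → ℝ)
    (hDstar : ∀ x, Dstar x = if 0 < p x + q x then p x / (p x + q x) else 1 / 2)
    (D : X → ℝ) (hD01 : ∀ x, D x ∈ Set.Ioo (0 : ℝ) 1)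
    (h1 : Integrable (fun x => p x * Real.log (D x)) μ)
    (h2 : Integrable (fun x => q x * Real.log (1 - D x)) μ)
    (h3 : Integrable (fun x => p x * Real.log (Dstar x)) μ)
    (h4 : Integrable (fun x => q x * Real.log (1 - Dstar x)) μ) :
    (∫ x, p x * Real.log (D x) ∂μ) + (∫ x, q x * Real.log (1 - D x) ∂μ) ≤
      (∫ x, p x * Real.log (Dstar x) ∂μ) + (∫ x, q x * Real.log (1 - Dstar x) ∂μ) := by
  rw [← integral_add h1 h2, ← integral_add h3 h4]
  refine integral_mono (h1.add h2) (h3.add h4) fun x => ?_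
  simp only [hDstar x]
  split_ifs with hpq
  · exact mul_log_add_mul_log_one_sub_le (hp0 x) (hq0 x) hpq (hD01 x).1 (hD01 x).2
  · obtain ⟨hp, hq⟩ : p x = 0 ∧ q x = 0 := by
      constructor <;> linarith [hp0 x, hq0 x, not_lt.1 hpq]
    simp [hp, hq]

/-- Proposition 1: the optimal discriminator is `D*(x) = p(x)/(p(x)+q(x))`
(where `p(x)+q(x) > 0`, and `1/2` elsewhere): for every measurable `D : X → (0,1)`,
`∫ p·log D dμ + ∫ q·log(1-D) dμ ≤ ∫ p·log D* dμ + ∫ q·log(1-D*) dμ`. -/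
theorem optimal_discriminator {X : Type*} [MeasurableSpace X]
    (μ : Measure X) [SigmaFinite μ]
    (p q : X → ℝ) (hp : Measurable p) (hq : Measurable q)
    (hp0 : ∀ x, 0 ≤ p x) (hq0 : ∀ x, 0 ≤ q x)
    (hp1 : ∫ x, p x ∂μ = 1) (hq1 : ∫ x, q x ∂μ = 1)
    (Dstar : X → ℝ)
    (hDstar : ∀ x, Dstar x = if 0 < p x + q x then p x / (p x + q x) else 1 / 2)
    (D : X → ℝ) (hD : Measurable D) (hD01 : ∀ x, D x ∈ Set.Ioo (0 : ℝ) 1)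
    (h1 : Integrable (fun x => p x * Real.log (D x)) μ)
    (h2 : Integrable (fun x => q x * Real.log (1 - D x)) μ)
    (h3 : Integrable (fun x => p x * Real.log (Dstar x)) μ)
    (h4 : Integrable (fun x => q x * Real.log (1 - Dstar x)) μ) :
    (∫ x, p x * Real.log (D x) ∂μ) + (∫ x, q x * Real.log (1 - D x) ∂μ) ≤
      (∫ x, p x * Real.log (Dstar x) ∂μ) + (∫ x, q x * Real.log (1 - Dstar x) ∂μ) :=
  optimal_discriminator_general μ p q hp0 hq0 Dstar hDstar D hD01 h1 h2 h3 h4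
end

section
/- Let μ be a σ-finite measure on a measurable space X, and let p and q be probability densities with respect to μ. Let m = (p + q)/2. Then, with the convention 0·log 0 = 0 and assuming the integrals are well-defined, ∫ p·log( p/(p + q) ) dμ + ∫ q·log( q/(p + q) ) dμ = KL(p ‖ m) + KL(q ‖ m) − log 4. -/
open MeasureTheory

/-- The hypothesis `s = 0 → a = 0` rules out the junk value `a / 0 = 0`. -/
lemma mul_log_div_div_eq_add {a s c : ℝ} (hc : c ≠ 0) (hs : s = 0 → a = 0) :
    a * Real.log (a / (s / c)) = a * Real.log (a / s) + a * Real.log c := by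
  rcases eq_or_ne a 0 with rfl | ha
  · simp
  have hs' : s ≠ 0 := fun h => ha (hs h)
  rw [div_div_eq_mul_div, mul_div_right_comm, Real.log_mul (div_ne_zero ha hs') hc, mul_add]

lemma integral_mul_log_div_div_eq_add {X : Type*} [MeasurableSpace X] {μ : Measure X}
    {p s : X → ℝ} {c : ℝ} (hc : c ≠ 0) (hs : ∀ x, s x = 0 → p x = 0) (hp1 : ∫ x, p x ∂μ = 1)
    (hint : Integrable (fun x => p x * Real.log (p x / s x)) μ) :
    ∫ x, p x * Real.log (p x / (s x / c)) ∂μ = (∫ x, p x * Real.log (p x / s x) ∂μ) + Real.log c := by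
  have hp : Integrable p μ := Integrable.of_integral_ne_zero (by simp [hp1])
  simp_rw [mul_log_div_div_eq_add hc (hs _)]
  rw [integral_add hint (hp.mul_const _), integral_mul_const, hp1, one_mul]

theorem adv_loss_eq_kl_sum_sub_log_four_general {X : Type*} [MeasurableSpace X]
    (μ : Measure X)
    (p q : X → ℝ)
    (hp0 : ∀ x, 0 ≤ p x) (hq0 : ∀ x, 0 ≤ q x)
    (hp1 : ∫ x, p x ∂μ = 1) (hq1 : ∫ x, q x ∂μ = 1)
    (h1 : Integrable (fun x => p x * Real.log (p x / (p x + q x))) μ)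
    (h2 : Integrable (fun x => q x * Real.log (q x / (p x + q x))) μ) :
    (∫ x, p x * Real.log (p x / (p x + q x)) ∂μ) +
      (∫ x, q x * Real.log (q x / (p x + q x)) ∂μ) =
    (∫ x, p x * Real.log (p x / ((p x + q x) / 2)) ∂μ) +
      (∫ x, q x * Real.log (q x / ((p x + q x) / 2)) ∂μ) - Real.log 4 := by
  have hp : ∀ x, p x + q x = 0 → p x = 0 := fun x h => by linarith [hp0 x, hq0 x]
  have hq : ∀ x, p x + q x = 0 → q x = 0 := fun x h => by linarith [hp0 x, hq0 x]
  have hlog4 : Real.log 4 = 2 * Real.log 2 := by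
    rw [show (4 : ℝ) = 2 ^ 2 by norm_num, Real.log_pow, Nat.cast_ofNat]
  rw [integral_mul_log_div_div_eq_add two_ne_zero hp hp1 h1,
    integral_mul_log_div_div_eq_add two_ne_zero hq hq1 h2, hlog4]
  ring

/-- for probability densities `p, q` w.r.t. `μ` and mixture `m = (p+q)/2`,
`∫ p·log(p/(p+q)) dμ + ∫ q·log(q/(p+q)) dμ = KL(p ‖ m) + KL(q ‖ m) − log 4`,
where `KL(p ‖ m) = ∫ p·log(p/m) dμ` (convention `0·log 0 = 0`). -/
theorem adv_loss_eq_kl_sum_sub_log_four {X : Type*} [MeasurableSpace X]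
    (μ : Measure X) [SigmaFinite μ]
    (p q : X → ℝ) (hp : Measurable p) (hq : Measurable q)
    (hp0 : ∀ x, 0 ≤ p x) (hq0 : ∀ x, 0 ≤ q x)
    (hp1 : ∫ x, p x ∂μ = 1) (hq1 : ∫ x, q x ∂μ = 1)
    (h1 : Integrable (fun x => p x * Real.log (p x / (p x + q x))) μ)
    (h2 : Integrable (fun x => q x * Real.log (q x / (p x + q x))) μ)
    (h3 : Integrable (fun x => p x * Real.log (p x / ((p x + q x) / 2))) μ)
    (h4 : Integrable (fun x => q x * Real.log (q x / ((p x + q x) / 2))) μ) :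
    (∫ x, p x * Real.log (p x / (p x + q x)) ∂μ) +
      (∫ x, q x * Real.log (q x / (p x + q x)) ∂μ) =
    (∫ x, p x * Real.log (p x / ((p x + q x) / 2)) ∂μ) +
      (∫ x, q x * Real.log (q x / ((p x + q x) / 2)) ∂μ) - Real.log 4 :=
  adv_loss_eq_kl_sum_sub_log_four_general μ p q hp0 hq0 hp1 hq1 h1 h2
end

section
/- Let μ be a σ-finite measure on a measurable space X, and let p and q be probability densities with respect to μ. Then, with the convention 0·log 0 = 0 and assuming the integrals are well-defined, ∫ p·log( p/(p + q) ) dμ + ∫ q·log( q/(p + q) ) dμ ≥ −log 4. -/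
/-!
Writing `m = (p + q) / 2`, one has `p log (p / (p + q)) = p log (p / m) - p log 2`, and the
pointwise Gibbs inequality `p log (p / m) ≥ p - m` integrates to `KL(p ‖ m) ≥ 0`, since `p`
and `m` have the same total mass. Hence each of the two integrals is at least `-log 2`.
-/

open MeasureTheory Real

lemma sub_le_mul_log_div {a b : ℝ} (ha : 0 ≤ a) (hb : 0 < b) : a - b ≤ a * log (a / b) := by
  rcases ha.eq_or_lt with rfl | ha
  · simpa using hb.le
  have h := one_sub_inv_le_log_of_pos (div_pos ha hb)
  calc a - b = a * (1 - (a / b)⁻¹) := by field_simp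
    _ ≤ a * log (a / b) := mul_le_mul_of_nonneg_left h ha.le

lemma sub_div_two_sub_mul_log_two_le_mul_log_div_add {a b : ℝ} (ha : 0 ≤ a) (hb : 0 ≤ b) :
    (a - b) / 2 - a * log 2 ≤ a * log (a / (a + b)) := by
  rcases ha.eq_or_lt with rfl | ha
  · simp only [zero_sub, zero_mul]
    linarith
  have hgibbs := sub_le_mul_log_div ha.le (by positivity : 0 < (a + b) / 2)
  have hsplit : log (a / ((a + b) / 2)) = log 2 + log (a / (a + b)) := by
    rw [← log_mul two_ne_zero (by positivity)]
    congr 1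
    field_simp
  rw [hsplit] at hgibbs
  linarith

lemma neg_log_two_le_integral_mul_log_div_add {X : Type*} [MeasurableSpace X] {μ : Measure X}
    {p q : X → ℝ} (hp0 : ∀ x, 0 ≤ p x) (hq0 : ∀ x, 0 ≤ q x)
    (hp1 : ∫ x, p x ∂μ = 1) (hq1 : ∫ x, q x ∂μ = 1)
    (hint : Integrable (fun x => p x * log (p x / (p x + q x))) μ) :
    -log 2 ≤ ∫ x, p x * log (p x / (p x + q x)) ∂μ := by
  have hpI : Integrable p μ := Integrable.of_integral_ne_zero (by simp [hp1])
  have hqI : Integrable q μ := Integrable.of_integral_ne_zero (by simp [hq1])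
  have hdiffI : Integrable (fun x => (p x - q x) / 2) μ := (hpI.sub hqI).div_const 2
  have hlog2I : Integrable (fun x => p x * log 2) μ := hpI.mul_const _
  calc -log 2 = ∫ x, (p x - q x) / 2 - p x * log 2 ∂μ := by
        rw [integral_sub hdiffI hlog2I, integral_div, integral_sub hpI hqI, integral_mul_const,
          hp1, hq1]
        ring
    _ ≤ ∫ x, p x * log (p x / (p x + q x)) ∂μ :=
        integral_mono (hdiffI.sub hlog2I) hint fun x =>
          sub_div_two_sub_mul_log_two_le_mul_log_div_add (hp0 x) (hq0 x)

theorem adv_loss_ge_neg_log_four_general {X : Type*} [MeasurableSpace X]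
    (μ : Measure X)
    (p q : X → ℝ)
    (hp0 : ∀ x, 0 ≤ p x) (hq0 : ∀ x, 0 ≤ q x)
    (hp1 : ∫ x, p x ∂μ = 1) (hq1 : ∫ x, q x ∂μ = 1)
    (h1 : Integrable (fun x => p x * Real.log (p x / (p x + q x))) μ)
    (h2 : Integrable (fun x => q x * Real.log (q x / (p x + q x))) μ) :
    (∫ x, p x * Real.log (p x / (p x + q x)) ∂μ) +
      (∫ x, q x * Real.log (q x / (p x + q x)) ∂μ) ≥ -Real.log 4 := by
  have hp := neg_log_two_le_integral_mul_log_div_add hp0 hq0 hp1 hq1 h1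
  have hq := neg_log_two_le_integral_mul_log_div_add hq0 hp0 hq1 hp1
    (by simpa only [add_comm] using h2)
  simp only [add_comm (q _)] at hq
  have hlog4 : log 4 = 2 * log 2 := by
    rw [show (4 : ℝ) = 2 ^ 2 by norm_num, log_pow, Nat.cast_ofNat]
  linarith

/-- for probability densities `p, q` w.r.t. `μ`,
`∫ p·log(p/(p+q)) dμ + ∫ q·log(q/(p+q)) dμ ≥ − log 4` (convention `0·log 0 = 0`). -/
theorem adv_loss_ge_neg_log_four {X : Type*} [MeasurableSpace X]
    (μ : Measure X) [SigmaFinite μ]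
    (p q : X → ℝ) (hp : Measurable p) (hq : Measurable q)
    (hp0 : ∀ x, 0 ≤ p x) (hq0 : ∀ x, 0 ≤ q x)
    (hp1 : ∫ x, p x ∂μ = 1) (hq1 : ∫ x, q x ∂μ = 1)
    (h1 : Integrable (fun x => p x * Real.log (p x / (p x + q x))) μ)
    (h2 : Integrable (fun x => q x * Real.log (q x / (p x + q x))) μ) :
    (∫ x, p x * Real.log (p x / (p x + q x)) ∂μ) +
      (∫ x, q x * Real.log (q x / (p x + q x)) ∂μ) ≥ -Real.log 4 :=
  adv_loss_ge_neg_log_four_general μ p q hp0 hq0 hp1 hq1 h1 h2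
end

section
/- Let μ be a σ-finite measure on a measurable space X, and let p and q be probability densities with respect to μ such that the integrals below are well-defined. Then ∫ p·log( p/(p + q) ) dμ + ∫ q·log( q/(p + q) ) dμ = −log 4 if and only if p = q μ-almost everywhere. -/
/-!
Pointwise, `a log (a/(a+b)) + b log (b/(a+b)) = -(a+b) H(a/(a+b))` with `H` the binary entropy,
and `H ≤ log 2` with equality only at `1/2`. So the integrand is bounded below by
`-(p+q) log 2`, whose integral is `-log 4`, with equality exactly where `p = q`; an integral
inequality between integrable functions is an equality iff the functions agree a.e.
-/

open MeasureTheory Real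

-- At `a + b = 0` both sides vanish, by the junk values `x / 0 = 0` and `log 0 = 0`.
lemma mul_log_div_add_add_mul_log_div_add (a b : ℝ) :
    a * log (a / (a + b)) + b * log (b / (a + b)) = -((a + b) * binEntropy (a / (a + b))) := by
  rcases eq_or_ne (a + b) 0 with hs | hs
  · obtain rfl : b = -a := by linarith
    simp
  · have hb : 1 - a / (a + b) = b / (a + b) := by field_simp; ring
    rw [binEntropy, hb, log_inv, log_inv]
    field_simp
    ring

lemma neg_mul_log_two_le_mul_log_div_add_add {a b : ℝ} (ha : 0 ≤ a) (hb : 0 ≤ b) :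
    -((a + b) * log 2) ≤ a * log (a / (a + b)) + b * log (b / (a + b)) := by
  rw [mul_log_div_add_add_mul_log_div_add, neg_le_neg_iff]
  exact mul_le_mul_of_nonneg_left binEntropy_le_log_two (add_nonneg ha hb)

lemma mul_log_div_add_add_mul_log_div_add_eq_iff {a b : ℝ} (ha : 0 ≤ a) (hb : 0 ≤ b) :
    a * log (a / (a + b)) + b * log (b / (a + b)) = -((a + b) * log 2) ↔ a = b := by
  rw [mul_log_div_add_add_mul_log_div_add, neg_inj]
  rcases (add_nonneg ha hb).eq_or_lt' with hs | hs
  · rw [hs, zero_mul, zero_mul]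
    exact iff_of_true rfl (by linarith)
  · rw [mul_right_inj' hs.ne', binEntropy_eq_log_two, div_eq_iff hs.ne']
    constructor <;> intro <;> linarith

theorem adv_loss_eq_neg_log_four_iff_general {X : Type*} [MeasurableSpace X]
    (μ : Measure X)
    (p q : X → ℝ)
    (hp0 : ∀ x, 0 ≤ p x) (hq0 : ∀ x, 0 ≤ q x)
    (hp1 : ∫ x, p x ∂μ = 1) (hq1 : ∫ x, q x ∂μ = 1)
    (h1 : Integrable (fun x => p x * Real.log (p x / (p x + q x))) μ)
    (h2 : Integrable (fun x => q x * Real.log (q x / (p x + q x))) μ) :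
    ((∫ x, p x * Real.log (p x / (p x + q x)) ∂μ) +
      (∫ x, q x * Real.log (q x / (p x + q x)) ∂μ) = -Real.log 4) ↔ p =ᵐ[μ] q := by
  have hp : Integrable p μ := .of_integral_ne_zero (by simp [hp1])
  have hq : Integrable q μ := .of_integral_ne_zero (by simp [hq1])
  have hlower : Integrable (fun x => -((p x + q x) * log 2)) μ :=
    ((hp.add hq).mul_const _).neg
  have hlower_integral : ∫ x, -((p x + q x) * log 2) ∂μ = -log 4 := by
    rw [integral_neg, integral_mul_const, integral_add hp hq, hp1, hq1,
      show (4 : ℝ) = 2 ^ 2 by norm_num, log_pow]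
    ring
  have hle : (fun x => -((p x + q x) * log 2)) ≤ᵐ[μ]
      fun x => p x * log (p x / (p x + q x)) + q x * log (q x / (p x + q x)) :=
    .of_forall fun x => neg_mul_log_two_le_mul_log_div_add_add (hp0 x) (hq0 x)
  have hsum : Integrable
      (fun x => p x * log (p x / (p x + q x)) + q x * log (q x / (p x + q x))) μ := h1.add h2
  rw [← integral_add h1 h2, ← hlower_integral, eq_comm, integral_eq_iff_of_ae_le hlower hsum hle]
  refine Filter.eventually_congr (.of_forall fun x => ?_)
  rw [eq_comm]
  exact mul_log_div_add_add_mul_log_div_add_eq_iff (hp0 x) (hq0 x)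

/-- for probability densities `p, q` w.r.t. `μ`,
`∫ p·log(p/(p+q)) dμ + ∫ q·log(q/(p+q)) dμ = − log 4` iff `p = q` `μ`-a.e. -/
theorem adv_loss_eq_neg_log_four_iff {X : Type*} [MeasurableSpace X]
    (μ : Measure X) [SigmaFinite μ]
    (p q : X → ℝ) (hp : Measurable p) (hq : Measurable q)
    (hp0 : ∀ x, 0 ≤ p x) (hq0 : ∀ x, 0 ≤ q x)
    (hp1 : ∫ x, p x ∂μ = 1) (hq1 : ∫ x, q x ∂μ = 1)
    (h1 : Integrable (fun x => p x * Real.log (p x / (p x + q x))) μ)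
    (h2 : Integrable (fun x => q x * Real.log (q x / (p x + q x))) μ) :
    ((∫ x, p x * Real.log (p x / (p x + q x)) ∂μ) +
      (∫ x, q x * Real.log (q x / (p x + q x)) ∂μ) = -Real.log 4) ↔ p =ᵐ[μ] q :=
  adv_loss_eq_neg_log_four_iff_general μ p q hp0 hq0 hp1 hq1 h1 h2
end

section
/- Let μ be a σ-finite measure on a measurable space X, let p_S and p_g be probability densities with respect to μ, and let β > 0. Let L, N be positive integers, d a positive integer; for i = 1,…,N let z_i ∈ (0,1)^L, f_i ∈ (0,1)^L, and x_i, g_i ∈ ℝ^d. Define the objective C = (1/N)·Σ_{i=1}^N Σ_{j=1}^L [ −z_{ij}·log f_{ij} − (1 − z_{ij})·log(1 − f_{ij}) ] + (1/N)·Σ_{i=1}^N ‖g_i − x_i‖² + β·( ∫ p_S·log( p_S/(p_S + p_g) ) dμ + ∫ p_g·log( p_g/(p_S + p_g) ) dμ ), assuming the integrals are well-defined. Then C ≥ (1/N)·Σ_{i=1}^N Σ_{j=1}^L [ −z_{ij}·log z_{ij} − (1 − z_{ij})·log(1 − z_{ij}) ] − β·log 4. -/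
/-!
Each of the three parts of the objective is bounded separately. The classification loss is a sum
of binary cross-entropies `H(z, f) ≥ H(z)` (Gibbs' inequality, from `log x ≤ x - 1`), and the
generation loss is nonnegative. At the optimal discriminator the adversarial loss is
`2·JS(p_S ‖ p_g) - log 4`; pointwise, `p log (p/(p+q)) + q log (q/(p+q)) = -(p+q)·h(p/(p+q))`
with `h` the binary entropy, and `h ≤ log 2`, so integrating against `∫ (p_S + p_g) = 2` gives
the bound `-log 4`.
-/

open MeasureTheory Finset Real

lemma sub_le_mul_log_sub_mul_log {a b : ℝ} (ha : 0 ≤ a) (hb : 0 < b) :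
    a - b ≤ a * log a - a * log b := by
  rcases ha.eq_or_lt with rfl | ha
  · simpa using hb.le
  · have h := mul_le_mul_of_nonneg_left (one_sub_inv_le_log_of_pos (div_pos ha hb)) ha.le
    rwa [log_div ha.ne' hb.ne', inv_div, mul_sub, mul_one, mul_div_cancel₀ _ ha.ne',
      mul_sub] at h

lemma binary_entropy_le_cross_entropy {a b : ℝ} (ha : a ∈ Set.Icc (0 : ℝ) 1)
    (hb : b ∈ Set.Ioo (0 : ℝ) 1) :
    -a * log a - (1 - a) * log (1 - a) ≤ -a * log b - (1 - a) * log (1 - b) := by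
  have h₀ := sub_le_mul_log_sub_mul_log ha.1 hb.1
  have h₁ := sub_le_mul_log_sub_mul_log (sub_nonneg.2 ha.2) (sub_pos.2 hb.2)
  linarith

lemma neg_mul_log_two_le_mul_log_div_add {p q : ℝ} (hp : 0 ≤ p) (hq : 0 ≤ q) :
    -((p + q) * log 2) ≤ p * log (p / (p + q)) + q * log (q / (p + q)) := by
  rcases (add_nonneg hp hq).eq_or_lt with hs | hs
  · obtain ⟨rfl, rfl⟩ : p = 0 ∧ q = 0 := ⟨by linarith, by linarith⟩
    simp
  have hq_div : q / (p + q) = 1 - p / (p + q) := by field_simp; ring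
  have hh := binEntropy_le_log_two (p := p / (p + q))
  rw [binEntropy, log_inv, log_inv, ← hq_div] at hh
  calc -((p + q) * log 2)
      ≤ (p + q) * (p / (p + q) * log (p / (p + q)) + q / (p + q) * log (q / (p + q))) := by
        nlinarith
    _ = p * log (p / (p + q)) + q * log (q / (p + q)) := by field_simp

lemma neg_integral_add_mul_log_two_le {X : Type*} [MeasurableSpace X] {μ : Measure X}
    {p q : X → ℝ} (hp0 : ∀ t, 0 ≤ p t) (hq0 : ∀ t, 0 ≤ q t)
    (hp : Integrable p μ) (hq : Integrable q μ)
    (hpl : Integrable (fun t => p t * log (p t / (p t + q t))) μ)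
    (hql : Integrable (fun t => q t * log (q t / (p t + q t))) μ) :
    -((∫ t, p t ∂μ) + (∫ t, q t ∂μ)) * log 2 ≤
      (∫ t, p t * log (p t / (p t + q t)) ∂μ) + ∫ t, q t * log (q t / (p t + q t)) ∂μ := by
  rw [← integral_add hp hq, ← integral_add hpl hql, ← integral_neg, ← integral_mul_const]
  refine integral_mono ((hp.add hq).neg.mul_const _) (hpl.add hql) fun t => ?_
  have h := neg_mul_log_two_le_mul_log_div_add (hp0 t) (hq0 t)
  linarith

theorem objective_lower_bound_general {X : Type*} [MeasurableSpace X]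
    (μ : Measure X)
    (pS pg : X → ℝ)
    (hpS0 : ∀ t, 0 ≤ pS t) (hpg0 : ∀ t, 0 ≤ pg t)
    (hpS1 : ∫ t, pS t ∂μ = 1) (hpg1 : ∫ t, pg t ∂μ = 1)
    (β : ℝ) (hβ : 0 < β)
    (L N d : ℕ)
    (z f : Fin N → Fin L → ℝ)
    (hz : ∀ i j, z i j ∈ Set.Ioo (0 : ℝ) 1)
    (hf : ∀ i j, f i j ∈ Set.Ioo (0 : ℝ) 1)
    (x g : Fin N → EuclideanSpace ℝ (Fin d))
    (h1 : Integrable (fun t => pS t * Real.log (pS t / (pS t + pg t))) μ)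
    (h2 : Integrable (fun t => pg t * Real.log (pg t / (pS t + pg t))) μ) :
    (1 / N : ℝ) * (∑ i, ∑ j,
        (-(z i j) * Real.log (f i j) - (1 - z i j) * Real.log (1 - f i j)))
      + (1 / N : ℝ) * (∑ i, ‖g i - x i‖ ^ 2)
      + β * ((∫ t, pS t * Real.log (pS t / (pS t + pg t)) ∂μ) +
             (∫ t, pg t * Real.log (pg t / (pS t + pg t)) ∂μ)) ≥
    (1 / N : ℝ) * (∑ i, ∑ j,
        (-(z i j) * Real.log (z i j) - (1 - z i j) * Real.log (1 - z i j)))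
      - β * Real.log 4 := by
  have hclass : (1 / N : ℝ) * (∑ i, ∑ j,
        (-(z i j) * log (z i j) - (1 - z i j) * log (1 - z i j))) ≤
      (1 / N : ℝ) * (∑ i, ∑ j,
        (-(z i j) * log (f i j) - (1 - z i j) * log (1 - f i j))) := by
    refine mul_le_mul_of_nonneg_left (sum_le_sum fun i _ => sum_le_sum fun j _ => ?_)
      (by positivity)
    exact binary_entropy_le_cross_entropy (Set.Ioo_subset_Icc_self (hz i j)) (hf i j)
  have hgen : 0 ≤ (1 / N : ℝ) * (∑ i, ‖g i - x i‖ ^ 2) := by positivity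
  have hadv : -log 4 ≤ (∫ t, pS t * log (pS t / (pS t + pg t)) ∂μ) +
      ∫ t, pg t * log (pg t / (pS t + pg t)) ∂μ := by
    have h := neg_integral_add_mul_log_two_le hpS0 hpg0
      (.of_integral_ne_zero (by simp [hpS1])) (.of_integral_ne_zero (by simp [hpg1])) h1 h2
    have hlog4 : log 4 = 2 * log 2 := by
      rw [show (4 : ℝ) = 2 ^ 2 by norm_num, log_pow, Nat.cast_ofNat]
    rw [hpS1, hpg1] at h
    linarith
  linarith [mul_le_mul_of_nonneg_left hadv hβ.le]

/-- lower bound of Proposition 2: the objective consisting of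
cross-entropy classification loss, least-squares generation loss, and `β` times the
adversarial loss at the optimal discriminator is bounded below by the average binary
entropy of the confidence vectors `z_i` minus `β·log 4`. -/
theorem objective_lower_bound {X : Type*} [MeasurableSpace X]
    (μ : Measure X) [SigmaFinite μ]
    (pS pg : X → ℝ) (hpS : Measurable pS) (hpg : Measurable pg)
    (hpS0 : ∀ t, 0 ≤ pS t) (hpg0 : ∀ t, 0 ≤ pg t)
    (hpS1 : ∫ t, pS t ∂μ = 1) (hpg1 : ∫ t, pg t ∂μ = 1)
    (β : ℝ) (hβ : 0 < β)
    (L N d : ℕ) (hL : 0 < L) (hN : 0 < N) (hd : 0 < d)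
    (z f : Fin N → Fin L → ℝ)
    (hz : ∀ i j, z i j ∈ Set.Ioo (0 : ℝ) 1)
    (hf : ∀ i j, f i j ∈ Set.Ioo (0 : ℝ) 1)
    (x g : Fin N → EuclideanSpace ℝ (Fin d))
    (h1 : Integrable (fun t => pS t * Real.log (pS t / (pS t + pg t))) μ)
    (h2 : Integrable (fun t => pg t * Real.log (pg t / (pS t + pg t))) μ) :
    (1 / N : ℝ) * (∑ i, ∑ j,
        (-(z i j) * Real.log (f i j) - (1 - z i j) * Real.log (1 - f i j)))
      + (1 / N : ℝ) * (∑ i, ‖g i - x i‖ ^ 2)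
      + β * ((∫ t, pS t * Real.log (pS t / (pS t + pg t)) ∂μ) +
             (∫ t, pg t * Real.log (pg t / (pS t + pg t)) ∂μ)) ≥
    (1 / N : ℝ) * (∑ i, ∑ j,
        (-(z i j) * Real.log (z i j) - (1 - z i j) * Real.log (1 - z i j)))
      - β * Real.log 4 :=
  objective_lower_bound_general μ pS pg hpS0 hpg0 hpS1 hpg1 β hβ L N d z f hz hf x g h1 h2
end

section
/- Let μ be a σ-finite measure on a measurable space X, let p_S and p_g be probability densities with respect to μ, and let β > 0. Let L, N, d be positive integers; for i = 1,…,N let z_i ∈ (0,1)^L, f_i ∈ (0,1)^L, and x_i, g_i ∈ ℝ^d. Define C = (1/N)·Σ_{i=1}^N Σ_{j=1}^L [ −z_{ij}·log f_{ij} − (1 − z_{ij})·log(1 − f_{ij}) ] + (1/N)·Σ_{i=1}^N ‖g_i − x_i‖² + β·( ∫ p_S·log( p_S/(p_S + p_g) ) dμ + ∫ p_g·log( p_g/(p_S + p_g) ) dμ ). If f_i = z_i for all i, g_i = x_i for all i, and p_g = p_S μ-almost everywhere, then C = (1/N)·Σ_{i=1}^N Σ_{j=1}^L [ −z_{ij}·log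 z_{ij} − (1 − z_{ij})·log(1 − z_{ij}) ] − β·log 4; that is, the lower bound of Proposition 2 is attained under these conditions. -/
open MeasureTheory Finset

lemma mul_log_div_self_add_self (a : ℝ) : a * Real.log (a / (a + a)) = -(Real.log 2 * a) := by
  rcases eq_or_ne a 0 with rfl | ha
  · simp
  · rw [← two_mul, div_mul_cancel_right₀ ha, Real.log_inv]
    ring

lemma integral_mul_log_div_add_add_of_ae_eq {X : Type*} [MeasurableSpace X] {μ : Measure X}
    {p q : X → ℝ} (h : q =ᵐ[μ] p) :
    (∫ t, p t * Real.log (p t / (p t + q t)) ∂μ) + (∫ t, q t * Real.log (q t / (p t + q t)) ∂μ)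
      = -(Real.log 4 * ∫ t, p t ∂μ) := by
  have hp : (∫ t, p t * Real.log (p t / (p t + q t)) ∂μ) = ∫ t, -(Real.log 2 * p t) ∂μ :=
    integral_congr_ae <| h.mono fun t ht ↦ by simp only [ht, mul_log_div_self_add_self]
  have hq : (∫ t, q t * Real.log (q t / (p t + q t)) ∂μ) = ∫ t, -(Real.log 2 * p t) ∂μ :=
    integral_congr_ae <| h.mono fun t ht ↦ by simp only [ht, mul_log_div_self_add_self]
  have hlog4 : Real.log 4 = 2 * Real.log 2 := by
    rw [show (4 : ℝ) = 2 ^ 2 by norm_num, Real.log_pow, Nat.cast_ofNat]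
  rw [hp, hq, integral_neg, integral_const_mul, hlog4]
  ring

theorem objective_lower_bound_attained_general {X : Type*} [MeasurableSpace X]
    (μ : Measure X)
    (pS pg : X → ℝ)
    (hpS1 : ∫ t, pS t ∂μ = 1)
    (β : ℝ)
    (L N d : ℕ)
    (z f : Fin N → Fin L → ℝ)
    (x g : Fin N → EuclideanSpace ℝ (Fin d))
    (hfz : ∀ i, f i = z i) (hgx : ∀ i, g i = x i)
    (hpgS : pg =ᵐ[μ] pS) :
    (1 / N : ℝ) * (∑ i, ∑ j,
        (-(z i j) * Real.log (f i j) - (1 - z i j) * Real.log (1 - f i j)))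
      + (1 / N : ℝ) * (∑ i, ‖g i - x i‖ ^ 2)
      + β * ((∫ t, pS t * Real.log (pS t / (pS t + pg t)) ∂μ) +
             (∫ t, pg t * Real.log (pg t / (pS t + pg t)) ∂μ)) =
    (1 / N : ℝ) * (∑ i, ∑ j,
        (-(z i j) * Real.log (z i j) - (1 - z i j) * Real.log (1 - z i j)))
      - β * Real.log 4 := by
  obtain rfl : f = z := funext hfz
  obtain rfl : g = x := funext hgx
  rw [integral_mul_log_div_add_add_of_ae_eq hpgS, hpS1]
  simp only [sub_self, norm_zero, zero_pow two_ne_zero, sum_const_zero]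
  ring

/-- attainment part of Proposition 2: the lower bound is attained when
`f_i = z_i`, `g_i = x_i` for all `i`, and `p_g = p_S` `μ`-a.e. -/
theorem objective_lower_bound_attained {X : Type*} [MeasurableSpace X]
    (μ : Measure X) [SigmaFinite μ]
    (pS pg : X → ℝ) (hpS : Measurable pS) (hpg : Measurable pg)
    (hpS0 : ∀ t, 0 ≤ pS t) (hpg0 : ∀ t, 0 ≤ pg t)
    (hpS1 : ∫ t, pS t ∂μ = 1) (hpg1 : ∫ t, pg t ∂μ = 1)
    (β : ℝ) (hβ : 0 < β)
    (L N d : ℕ) (hL : 0 < L) (hN : 0 < N) (hd : 0 < d)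
    (z f : Fin N → Fin L → ℝ)
    (hz : ∀ i j, z i j ∈ Set.Ioo (0 : ℝ) 1)
    (hf : ∀ i j, f i j ∈ Set.Ioo (0 : ℝ) 1)
    (x g : Fin N → EuclideanSpace ℝ (Fin d))
    (hfz : ∀ i, f i = z i) (hgx : ∀ i, g i = x i)
    (hpgS : pg =ᵐ[μ] pS) :
    (1 / N : ℝ) * (∑ i, ∑ j,
        (-(z i j) * Real.log (f i j) - (1 - z i j) * Real.log (1 - f i j)))
      + (1 / N : ℝ) * (∑ i, ‖g i - x i‖ ^ 2)
      + β * ((∫ t, pS t * Real.log (pS t / (pS t + pg t)) ∂μ) +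
             (∫ t, pg t * Real.log (pg t / (pS t + pg t)) ∂μ)) =
    (1 / N : ℝ) * (∑ i, ∑ j,
        (-(z i j) * Real.log (z i j) - (1 - z i j) * Real.log (1 - z i j)))
      - β * Real.log 4 :=
  objective_lower_bound_attained_general μ pS pg hpS1 β L N d z f x g hfz hgx hpgS
end
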